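/- arXiv:2107.02092 — 3 statements merged into one kernel-verified Lean document; each statement's English description precedes it below -/
import Mathlib

section
/- For all parameters α > 0, ζ > 0, δ > 0, γ ∈ ℝ and every natural number n, the n-th moment of the symmetric K-distribution equals μ_n = ∫_{-∞}^{∞} x^{n} f(x) dx = Σ_{k=0}^{n} [n! Γ(α + n - k) Γ(ζ + n - k) / (k! (n-k)! Γ(α) Γ(ζ))] · γ^{k} ((-1)^{n-k} + 1) / (2 δ^{n-k}), where f is the SKD density. -/
/-!
Translating by `γ` and expanding `(y + γ) ^ n` binomially reduces the claim to the central
moments. For the central moment of order `m`, Fubini swaps the two integrals: at a fixed scale `β`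
the reflected Gamma density has `m`-th moment `((-1) ^ m + 1) / 2 * β ^ m * Γ(α + m) / Γ(α)` (odd
moments vanish by symmetry), and integrating `β ^ m` against the Gamma prior gives
`Γ(ζ + m) / (Γ(ζ) * δ ^ m)`. The same computation with `|y| ^ m` justifies Fubini.
-/

open Real MeasureTheory

/-- Density of the symmetric K-distribution (SKD): the continuous mixture of a
reflected Gamma parental density over a Gamma prior. -/
noncomputable def skdDensity (α ζ δ γ : ℝ) (x : ℝ) : ℝ :=
  ∫ β in Set.Ioi (0 : ℝ),
    (|x - γ| ^ (α - 1) / (2 * β ^ α * Real.Gamma α)) * Real.exp (-|x - γ| / β) *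
      ((δ ^ ζ * β ^ (ζ - 1) / Real.Gamma ζ) * Real.exp (-δ * β))

open Set

lemma integrableOn_Ioi_rpow_mul_exp_neg_mul {a r : ℝ} (ha : 0 < a) (hr : 0 < r) :
    IntegrableOn (fun t : ℝ => t ^ (a - 1) * exp (-(r * t))) (Ioi 0) := by
  simpa only [rpow_one, neg_mul] using
    integrableOn_rpow_mul_exp_neg_mul_rpow (p := 1) (by linarith) one_pos hr

lemma integral_pow_mul_comp_abs {h : ℝ → ℝ} {m : ℕ}
    (hh : IntegrableOn (fun t => t ^ m * h t) (Ioi 0)) :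
    Integrable (fun y => y ^ m * h |y|) ∧
      ∫ y, y ^ m * h |y| = ((-1) ^ m + 1) * ∫ t in Ioi 0, t ^ m * h t := by
  set f : ℝ → ℝ := fun y => y ^ m * h |y|
  have hf_neg : ∀ y, f (-y) = (-1) ^ m * f y := fun y => by
    change (-y) ^ m * h |-y| = (-1) ^ m * (y ^ m * h |y|)
    rw [neg_pow, abs_neg, mul_assoc]
  have hf_Ioi : EqOn f (fun t => t ^ m * h t) (Ioi 0) := fun t ht => by
    simp only [f, abs_of_pos (mem_Ioi.mp ht)]
  have hIoi : IntegrableOn f (Ioi 0) := hh.congr_fun hf_Ioi.symm measurableSet_Ioi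
  have hIic : IntegrableOn f (Iic 0) := by
    have h' : IntegrableOn (fun y => (-1) ^ m * f y) (Ici 0) :=
      (Iff.mpr integrableOn_Ici_iff_integrableOn_Ioi hIoi).const_mul _
    rw [← neg_zero] at h'
    replace h' := h'.comp_neg_Iic
    refine h'.congr_fun (fun y _ => ?_) measurableSet_Iic
    simp only [hf_neg, ← mul_assoc, ← mul_pow]; norm_num
  have hIic_eq : ∫ y in Iic 0, f y = (-1) ^ m * ∫ t in Ioi 0, f t := by
    have h' := integral_comp_neg_Ioi 0 f
    rw [neg_zero] at h'
    simp only [← h', hf_neg, integral_const_mul]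
  refine ⟨integrableOn_univ.mp (Iic_union_Ioi (a := (0 : ℝ)) ▸ hIic.union hIoi), ?_⟩
  rw [← intervalIntegral.integral_Iic_add_Ioi hIic hIoi, hIic_eq,
    setIntegral_congr_fun measurableSet_Ioi hf_Ioi]
  ring

lemma integral_pow_mul_rpow_mul_exp_neg_div_Ioi {α β : ℝ} (hα : 0 < α) (hβ : 0 < β) (m : ℕ) :
    IntegrableOn (fun t : ℝ => t ^ m * (t ^ (α - 1) * exp (-t / β))) (Ioi 0) ∧
      ∫ t in Ioi 0, t ^ m * (t ^ (α - 1) * exp (-t / β)) = β ^ (α + m) * Gamma (α + m) := by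
  have hαm : 0 < α + m := by positivity
  have hβ' : 0 < β⁻¹ := inv_pos.mpr hβ
  have heq : EqOn (fun t : ℝ => t ^ (α + m - 1) * exp (-(β⁻¹ * t)))
      (fun t => t ^ m * (t ^ (α - 1) * exp (-t / β))) (Ioi 0) := fun t ht => by
    dsimp only
    rw [show α + (m : ℝ) - 1 = m + (α - 1) by ring, rpow_add (mem_Ioi.mp ht), rpow_natCast,
      inv_mul_eq_div, neg_div, mul_assoc]
  refine ⟨(integrableOn_Ioi_rpow_mul_exp_neg_mul hαm hβ').congr_fun heq measurableSet_Ioi, ?_⟩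
  rw [← setIntegral_congr_fun measurableSet_Ioi heq, integral_rpow_mul_exp_neg_mul_Ioi hαm hβ',
    one_div, inv_inv]

noncomputable def skdKernel (α ζ δ y β : ℝ) : ℝ :=
  |y| ^ (α - 1) / (2 * β ^ α * Gamma α) * exp (-|y| / β) *
    ((δ ^ ζ * β ^ (ζ - 1) / Gamma ζ) * exp (-δ * β))

lemma skdDensity_eq_integral_skdKernel (α ζ δ γ x : ℝ) :
    skdDensity α ζ δ γ x = ∫ β in Ioi 0, skdKernel α ζ δ (x - γ) β :=
  rfl

lemma skdDensity_add_right (α ζ δ γ y : ℝ) :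
    skdDensity α ζ δ γ (y + γ) = skdDensity α ζ δ 0 y := by
  simp only [skdDensity_eq_integral_skdKernel, add_sub_cancel_right, sub_zero]

lemma skdKernel_eq_mul (α ζ δ y β : ℝ) :
    skdKernel α ζ δ y β = δ ^ ζ / (2 * Gamma α * Gamma ζ) *
      (β ^ (ζ - 1) * exp (-(δ * β)) / β ^ α) * (|y| ^ (α - 1) * exp (-|y| / β)) := by
  rw [skdKernel, neg_mul]
  ring

lemma rpow_sub_div_rpow_mul_rpow_add {β : ℝ} (hβ : 0 < β) (α ζ : ℝ) (m : ℕ) :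
    β ^ (ζ - 1) / β ^ α * β ^ (α + m) = β ^ (ζ + m - 1) := by
  rw [← rpow_sub hβ, ← rpow_add hβ]
  ring_nf

lemma integral_pow_mul_skdKernel {α ζ δ β : ℝ} (hα : 0 < α) (hβ : 0 < β) (m : ℕ) :
    Integrable (fun y => y ^ m * skdKernel α ζ δ y β) ∧
      ∫ y, y ^ m * skdKernel α ζ δ y β =
        ((-1) ^ m + 1) * (Gamma (α + m) * δ ^ ζ / (2 * Gamma α * Gamma ζ)) *
          (β ^ (ζ + m - 1) * exp (-(δ * β))) := by
  obtain ⟨hint, hval⟩ := integral_pow_mul_comp_abs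
    (integral_pow_mul_rpow_mul_exp_neg_div_Ioi hα hβ m).1
  set c := δ ^ ζ / (2 * Gamma α * Gamma ζ) * (β ^ (ζ - 1) * exp (-(δ * β)) / β ^ α) with hc_def
  have hK : ∀ y, y ^ m * skdKernel α ζ δ y β = c * (y ^ m * (|y| ^ (α - 1) * exp (-|y| / β))) :=
    fun y => by rw [skdKernel_eq_mul, ← hc_def]; ring
  simp only [hK]
  refine ⟨hint.const_mul c, ?_⟩
  rw [integral_const_mul, hval, (integral_pow_mul_rpow_mul_exp_neg_div_Ioi hα hβ m).2,
    hc_def, ← rpow_sub_div_rpow_mul_rpow_add hβ α ζ m]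
  ring

lemma integral_norm_pow_mul_skdKernel {α ζ δ β : ℝ} (hα : 0 < α) (hζ : 0 < ζ) (hδ : 0 < δ)
    (hβ : 0 < β) (m : ℕ) :
    ∫ y, ‖y ^ m * skdKernel α ζ δ y β‖ =
      2 * (Gamma (α + m) * δ ^ ζ / (2 * Gamma α * Gamma ζ)) *
        (β ^ (ζ + m - 1) * exp (-(δ * β))) := by
  set c := δ ^ ζ / (2 * Gamma α * Gamma ζ) * (β ^ (ζ - 1) * exp (-(δ * β)) / β ^ α) with hc_def
  have hc : 0 ≤ c := by have := Gamma_pos_of_pos hα; have := Gamma_pos_of_pos hζ; positivity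
  have hK : ∀ y, ‖y ^ m * skdKernel α ζ δ y β‖ = c * (|y| ^ m * (|y| ^ (α - 1) * exp (-|y| / β))) :=
    fun y => by
      rw [skdKernel_eq_mul, ← hc_def, norm_mul, norm_pow, norm_mul, norm_eq_abs, norm_eq_abs,
        norm_eq_abs, abs_of_nonneg hc,
        abs_of_nonneg (by positivity : 0 ≤ |y| ^ (α - 1) * exp (-|y| / β))]
      ring
  simp only [hK]
  rw [integral_const_mul, integral_comp_abs (f := fun t => t ^ m * (t ^ (α - 1) * exp (-t / β))),
    (integral_pow_mul_rpow_mul_exp_neg_div_Ioi hα hβ m).2,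
    hc_def, ← rpow_sub_div_rpow_mul_rpow_add hβ α ζ m]
  ring

lemma integrable_pow_mul_skdKernel_prod {α ζ δ : ℝ} (hα : 0 < α) (hζ : 0 < ζ) (hδ : 0 < δ)
    (m : ℕ) :
    Integrable (Function.uncurry fun y β => y ^ m * skdKernel α ζ δ y β)
      (volume.prod (volume.restrict (Ioi 0))) := by
  have hmeas : AEStronglyMeasurable (Function.uncurry fun y β => y ^ m * skdKernel α ζ δ y β)
      (volume.prod (volume.restrict (Ioi 0))) := by
    unfold skdKernel
    fun_prop
  refine (integrable_prod_iff' hmeas).mpr ⟨?_, ?_⟩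
  · filter_upwards [ae_restrict_mem measurableSet_Ioi] with β hβ
    exact (integral_pow_mul_skdKernel hα hβ m).1
  · refine IntegrableOn.congr_fun
      ((integrableOn_Ioi_rpow_mul_exp_neg_mul (a := ζ + m) (by positivity) hδ).const_mul _)
      (fun β hβ => (integral_norm_pow_mul_skdKernel hα hζ hδ hβ m).symm) measurableSet_Ioi

lemma skd_central_moment {α ζ δ : ℝ} (hα : 0 < α) (hζ : 0 < ζ) (hδ : 0 < δ) (m : ℕ) :
    Integrable (fun y => y ^ m * skdDensity α ζ δ 0 y) ∧
      ∫ y, y ^ m * skdDensity α ζ δ 0 y =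
        Gamma (α + m) * Gamma (ζ + m) / (Gamma α * Gamma ζ) * (((-1) ^ m + 1) / (2 * δ ^ m)) := by
  have hF := integrable_pow_mul_skdKernel_prod hα hζ hδ m
  have hmix : ∀ y, y ^ m * skdDensity α ζ δ 0 y = ∫ β in Ioi 0, y ^ m * skdKernel α ζ δ y β :=
    fun y => by rw [skdDensity_eq_integral_skdKernel, sub_zero, integral_const_mul]
  simp only [hmix]
  refine ⟨hF.integral_prod_left, ?_⟩
  rw [integral_integral_swap hF, setIntegral_congr_fun measurableSet_Ioi
    (fun β hβ => (integral_pow_mul_skdKernel hα hβ m).2), integral_const_mul,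
    integral_rpow_mul_exp_neg_mul_Ioi (by positivity) hδ, one_div, inv_rpow hδ.le,
    rpow_add hδ, rpow_natCast]
  have := Gamma_pos_of_pos hα
  have := Gamma_pos_of_pos hζ
  have := rpow_pos_of_pos hδ ζ
  field_simp

/-- The n-th moment of the symmetric K-distribution. -/
theorem skd_nth_moment (α ζ δ γ : ℝ) (hα : 0 < α) (hζ : 0 < ζ) (hδ : 0 < δ) (n : ℕ) :
    ∫ x : ℝ, x ^ n * skdDensity α ζ δ γ x
      = ∑ k ∈ Finset.range (n + 1),
          (n.factorial : ℝ) * Real.Gamma (α + (n - k : ℕ)) * Real.Gamma (ζ + (n - k : ℕ)) /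
              ((k.factorial : ℝ) * ((n - k).factorial : ℝ) * Real.Gamma α * Real.Gamma ζ) *
            (γ ^ k * ((-1 : ℝ) ^ (n - k) + 1) / (2 * δ ^ (n - k))) := by
  have hexpand : ∀ y, (y + γ) ^ n * skdDensity α ζ δ γ (y + γ) =
      ∑ k ∈ Finset.range (n + 1),
        γ ^ k * n.choose k * (y ^ (n - k) * skdDensity α ζ δ 0 y) := fun y => by
    rw [skdDensity_add_right, add_comm, add_pow, Finset.sum_mul]
    exact Finset.sum_congr rfl fun k _ => by ring
  rw [← integral_add_right_eq_self _ γ]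
  simp only [hexpand]
  rw [integral_finsetSum _ fun k _ => ((skd_central_moment hα hζ hδ (n - k)).1.const_mul _)]
  refine Finset.sum_congr rfl fun k hk => ?_
  rw [integral_const_mul, (skd_central_moment hα hζ hδ (n - k)).2,
    Nat.cast_choose ℝ (Nat.lt_succ_iff.mp (Finset.mem_range.mp hk))]
  ring
end

section
/- For all parameters α > 0, ζ > 0, δ > 0 and γ ∈ ℝ, the second moment of the symmetric K-distribution equals μ_2 = ∫_{-∞}^{∞} x^{2} f(x) dx = α(α+1)ζ(ζ+1)/δ² + γ², where f is the SKD density. -/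
/-! Given the scale `β`, the reflected Gamma law is symmetric about `γ` with absolute central
moments `∫ |x - γ| ^ p f(x | β) dx = β ^ p Γ(α + p) / Γ(α)` (fold onto `x > γ` and use Euler's
integral), so its second moment is `α (α + 1) β ^ 2 + γ ^ 2`. The integrand of the second moment
of the mixture is nonnegative, so Tonelli lets us integrate out `x` first; what remains is the
prior average of `α (α + 1) β ^ 2 + γ ^ 2`, and the Gamma prior has `E[β ^ 2] = ζ (ζ + 1) / δ ^ 2`.
-/

open Real MeasureTheory

open Set

theorem integral_integral_swap_of_nonneg {X Y : Type*} [MeasurableSpace X] [MeasurableSpace Y]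
    {μ : Measure X} {ν : Measure Y} [SFinite μ] [SFinite ν] {f : X → Y → ℝ}
    (hf : AEStronglyMeasurable (Function.uncurry f) (μ.prod ν)) (hf₀ : ∀ᵐ x ∂μ, ∀ y, 0 ≤ f x y)
    (hfx : ∀ᵐ x ∂μ, Integrable (f x) ν) (hfint : Integrable (fun x ↦ ∫ y, f x y ∂ν) μ) :
    ∫ y, ∫ x, f x y ∂μ ∂ν = ∫ x, ∫ y, f x y ∂ν ∂μ := by
  have hnorm : (fun x ↦ ∫ y, f x y ∂ν) =ᵐ[μ] fun x ↦ ∫ y, ‖f x y‖ ∂ν := by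
    filter_upwards [hf₀] with x hx
    simp_rw [Real.norm_of_nonneg (hx _)]
  exact (integral_integral_swap ((integrable_prod_iff hf).2 ⟨hfx, hfint.congr hnorm⟩)).symm

theorem integral_eq_zero_of_odd {f : ℝ → ℝ} (hf : Function.Odd f) : ∫ x, f x = 0 := by
  have h := integral_neg_eq_self f volume
  simp only [hf _, integral_neg] at h
  linarith

theorem Real.Gamma_add_two {s : ℝ} (hs : 0 < s) : Gamma (s + 2) = (s + 1) * s * Gamma s := by
  rw [show s + 2 = s + 1 + 1 by ring, Gamma_add_one (by positivity), Gamma_add_one hs.ne',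
    mul_assoc]

noncomputable def reflectedGammaPDF (α β γ x : ℝ) : ℝ :=
  |x - γ| ^ (α - 1) / (2 * β ^ α * Gamma α) * exp (-|x - γ| / β)

noncomputable def gammaPriorPDF (ζ δ β : ℝ) : ℝ :=
  δ ^ ζ * β ^ (ζ - 1) / Gamma ζ * exp (-δ * β)

section ReflectedGamma

variable {α β γ : ℝ}

theorem reflectedGammaPDF_nonneg (hα : 0 ≤ α) (hβ : 0 ≤ β) (x : ℝ) :
    0 ≤ reflectedGammaPDF α β γ x := by
  unfold reflectedGammaPDF
  positivity

theorem reflectedGammaPDF_eq_sub (x : ℝ) :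
    reflectedGammaPDF α β γ x = reflectedGammaPDF α β 0 (x - γ) := by
  simp [reflectedGammaPDF]

theorem integral_abs_sub_rpow_mul_reflectedGammaPDF (hα : 0 < α) (hβ : 0 < β) {p : ℝ}
    (hp : 0 < α + p) :
    ∫ x, |x - γ| ^ p * reflectedGammaPDF α β γ x = β ^ p * Gamma (α + p) / Gamma α := by
  simp_rw [reflectedGammaPDF_eq_sub (γ := γ)]
  rw [integral_sub_right_eq_self (fun u ↦ |u| ^ p * reflectedGammaPDF α β 0 u)]
  simp only [reflectedGammaPDF, sub_zero]
  rw [integral_comp_abs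
    (f := fun t ↦ t ^ p * (t ^ (α - 1) / (2 * β ^ α * Gamma α) * exp (-t / β)))]
  have hpt : ∀ t ∈ Ioi (0 : ℝ), t ^ p * (t ^ (α - 1) / (2 * β ^ α * Gamma α) * exp (-t / β))
      = (2 * β ^ α * Gamma α)⁻¹ * (t ^ (α + p - 1) * exp (-(β⁻¹ * t))) := fun t ht ↦ by
    rw [show α + p - 1 = p + (α - 1) by ring, rpow_add ht]
    ring_nf
  rw [setIntegral_congr_fun measurableSet_Ioi hpt, integral_const_mul,
    integral_rpow_mul_exp_neg_mul_Ioi hp (inv_pos.2 hβ), one_div, inv_inv, rpow_add hβ]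
  have : 0 < Gamma α := Gamma_pos_of_pos hα
  field_simp

theorem integral_sub_mul_reflectedGammaPDF : ∫ x, (x - γ) * reflectedGammaPDF α β γ x = 0 := by
  simp_rw [reflectedGammaPDF_eq_sub (γ := γ)]
  rw [integral_sub_right_eq_self (fun u ↦ u * reflectedGammaPDF α β 0 u)]
  exact integral_eq_zero_of_odd fun u ↦ by simp [reflectedGammaPDF]

theorem integral_sq_mul_reflectedGammaPDF (hα : 0 < α) (hβ : 0 < β) :
    ∫ x, x ^ 2 * reflectedGammaPDF α β γ x = α * (α + 1) * β ^ 2 + γ ^ 2 := by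
  have moment {p : ℝ} (hp : 0 < α + p) :=
    integral_abs_sub_rpow_mul_reflectedGammaPDF (γ := γ) hα hβ hp
  have mean := integral_sub_mul_reflectedGammaPDF (α := α) (β := β) (γ := γ)
  have nonneg := reflectedGammaPDF_nonneg (γ := γ) hα.le hβ.le
  set f := reflectedGammaPDF α β γ
  have integrable {p : ℝ} (hp : 0 < α + p) : Integrable fun x ↦ |x - γ| ^ p * f x :=
    .of_integral_ne_zero <| by rw [moment hp]; have := Gamma_pos_of_pos hp; positivity
  have h0 : 0 < α + 0 := by linarith
  have h2 : 0 < α + 2 := by linarith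
  have i1 : Integrable fun x ↦ (x - γ) * f x := by
    refine (integrable (p := 1) (by linarith)).mono' (by unfold f reflectedGammaPDF; fun_prop) ?_
    refine ae_of_all _ fun x ↦ ?_
    rw [norm_mul, Real.norm_of_nonneg (nonneg x), rpow_one, Real.norm_eq_abs]
  have hsplit : ∀ x, x ^ 2 * f x = |x - γ| ^ (2 : ℝ) * f x
      + (2 * γ * ((x - γ) * f x) + γ ^ 2 * (|x - γ| ^ (0 : ℝ) * f x)) :=
    fun x ↦ by rw [rpow_two, sq_abs, rpow_zero]; ring
  simp_rw [hsplit]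
  rw [integral_add (integrable h2) (by exact (i1.const_mul _).add ((integrable h0).const_mul _)),
    integral_add (i1.const_mul _) ((integrable h0).const_mul _), integral_const_mul,
    integral_const_mul, mean, moment h2, moment h0, rpow_two, rpow_zero, add_zero,
    Gamma_add_two hα]
  have := Gamma_pos_of_pos hα
  field_simp
  ring

theorem integrable_sq_mul_reflectedGammaPDF (hα : 0 < α) (hβ : 0 < β) :
    Integrable fun x ↦ x ^ 2 * reflectedGammaPDF α β γ x :=
  .of_integral_ne_zero <| by rw [integral_sq_mul_reflectedGammaPDF hα hβ]; positivity

end ReflectedGamma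

section GammaPrior

variable {ζ δ : ℝ}

theorem gammaPriorPDF_nonneg (hζ : 0 ≤ ζ) (hδ : 0 ≤ δ) {β : ℝ} (hβ : 0 ≤ β) :
    0 ≤ gammaPriorPDF ζ δ β := by
  unfold gammaPriorPDF
  positivity

theorem integral_rpow_mul_gammaPriorPDF (hζ : 0 < ζ) (hδ : 0 < δ) {p : ℝ} (hp : 0 < ζ + p) :
    ∫ β in Ioi 0, β ^ p * gammaPriorPDF ζ δ β = Gamma (ζ + p) / (Gamma ζ * δ ^ p) := by
  have hpt : ∀ β ∈ Ioi (0 : ℝ), β ^ p * gammaPriorPDF ζ δ β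
      = δ ^ ζ / Gamma ζ * (β ^ (ζ + p - 1) * exp (-(δ * β))) := fun β hβ ↦ by
    rw [gammaPriorPDF, show ζ + p - 1 = p + (ζ - 1) by ring, rpow_add hβ]
    ring_nf
  rw [setIntegral_congr_fun measurableSet_Ioi hpt, integral_const_mul,
    integral_rpow_mul_exp_neg_mul_Ioi hp hδ, one_div, inv_rpow hδ.le, rpow_add hδ]
  have := Gamma_pos_of_pos hζ
  field_simp

theorem integrableOn_rpow_mul_gammaPriorPDF (hζ : 0 < ζ) (hδ : 0 < δ) {p : ℝ} (hp : 0 < ζ + p) :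
    IntegrableOn (fun β ↦ β ^ p * gammaPriorPDF ζ δ β) (Ioi 0) :=
  .of_integral_ne_zero <| by
    rw [integral_rpow_mul_gammaPriorPDF hζ hδ hp]
    have := Gamma_pos_of_pos hp
    positivity

theorem integrableOn_quadratic_mul_gammaPriorPDF (hζ : 0 < ζ) (hδ : 0 < δ) (a b : ℝ) :
    IntegrableOn (fun β ↦ (a * β ^ 2 + b) * gammaPriorPDF ζ δ β) (Ioi 0) := by
  have h2 := integrableOn_rpow_mul_gammaPriorPDF hζ hδ (p := 2) (by linarith)
  have h0 := integrableOn_rpow_mul_gammaPriorPDF hζ hδ (p := 0) (by linarith)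
  simp only [rpow_two, rpow_zero, one_mul] at h2 h0
  refine ((h2.const_mul a).add (h0.const_mul b)).congr (ae_of_all _ fun β ↦ ?_)
  simp only [Pi.add_apply]
  ring

theorem integral_quadratic_mul_gammaPriorPDF (hζ : 0 < ζ) (hδ : 0 < δ) (a b : ℝ) :
    ∫ β in Ioi 0, (a * β ^ 2 + b) * gammaPriorPDF ζ δ β = a * ζ * (ζ + 1) / δ ^ 2 + b := by
  have h2 := integrableOn_rpow_mul_gammaPriorPDF hζ hδ (p := 2) (by linarith)
  have h0 := integrableOn_rpow_mul_gammaPriorPDF hζ hδ (p := 0) (by linarith)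
  have m2 := integral_rpow_mul_gammaPriorPDF hζ hδ (p := 2) (by linarith)
  have m0 := integral_rpow_mul_gammaPriorPDF hζ hδ (p := 0) (by linarith)
  simp only [rpow_two, rpow_zero, one_mul, add_zero, mul_one] at h2 h0 m2 m0
  simp_rw [add_mul, mul_assoc]
  rw [integral_add (h2.const_mul a) (h0.const_mul b), integral_const_mul, integral_const_mul, m2,
    m0, Gamma_add_two hζ]
  have := Gamma_pos_of_pos hζ
  field_simp

end GammaPrior

/-- The second moment of the symmetric K-distribution. -/
theorem skd_second_moment (α ζ δ γ : ℝ) (hα : 0 < α) (hζ : 0 < ζ) (hδ : 0 < δ) :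
    ∫ x : ℝ, x ^ 2 * skdDensity α ζ δ γ x
      = α * (α + 1) * ζ * (ζ + 1) / δ ^ 2 + γ ^ 2 := by
  let F β x := x ^ 2 * (reflectedGammaPDF α β γ x * gammaPriorPDF ζ δ β)
  have hinner : ∀ β ∈ Ioi (0 : ℝ),
      ∫ x, F β x = (α * (α + 1) * β ^ 2 + γ ^ 2) * gammaPriorPDF ζ δ β := fun β hβ ↦ by
    simp only [F, ← mul_assoc, integral_mul_const, integral_sq_mul_reflectedGammaPDF hα hβ]
  have hswap : ∫ x, ∫ β in Ioi 0, F β x = ∫ β in Ioi 0, ∫ x, F β x := by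
    refine integral_integral_swap_of_nonneg (by unfold F reflectedGammaPDF gammaPriorPDF; fun_prop)
      ?_ ?_ ?_
    · filter_upwards [ae_restrict_mem measurableSet_Ioi] with β (hβ : 0 < β) x
      have := reflectedGammaPDF_nonneg (γ := γ) hα.le hβ.le x
      have := gammaPriorPDF_nonneg hζ.le hδ.le hβ.le
      positivity
    · filter_upwards [ae_restrict_mem measurableSet_Ioi] with β (hβ : 0 < β)
      simpa only [F, mul_assoc] using (integrable_sq_mul_reflectedGammaPDF hα hβ).mul_const _
    · exact (integrableOn_quadratic_mul_gammaPriorPDF hζ hδ _ _).congr_fun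
        (fun β hβ ↦ (hinner β hβ).symm) measurableSet_Ioi
  calc ∫ x, x ^ 2 * skdDensity α ζ δ γ x = ∫ x, ∫ β in Ioi 0, F β x := by
        simp only [F, skdDensity, ← integral_const_mul]; rfl
    _ = ∫ β in Ioi 0, (α * (α + 1) * β ^ 2 + γ ^ 2) * gammaPriorPDF ζ δ β := by
        rw [hswap, setIntegral_congr_fun measurableSet_Ioi hinner]
    _ = _ := by rw [integral_quadratic_mul_gammaPriorPDF hζ hδ]
end

section
/- For all parameters α > 0, ζ > 0, δ > 0 and γ ∈ ℝ, the fourth central moment of the symmetric K-distribution equals ∫_{-∞}^{∞} (x - γ)⁴ f(x) dx = α(α+1)(α+2)(α+3)ζ(ζ+1)(ζ+2)(ζ+3)/δ⁴, where f is the SKD density and γ is its mean. -/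
/-!
Given the scale `β`, `|X - γ|` is Gamma distributed with shape `α` and rate `β⁻¹`, so its
`s`-th moment is `Γ(α + s) / Γ(α) · β ^ s`; averaging `β ^ s` against the Gamma(`ζ`, `δ`) prior
gives `Γ(ζ + s) / (Γ(ζ) δ ^ s)`. The joint integrand is nonnegative, so Fubini applies once the
iterated integral of its absolute value is seen to be finite, which is the same computation.
For `s = 4` the ratios `Γ(a + 4) / Γ(a)` are the rising products `a (a + 1) (a + 2) (a + 3)`.
-/

open Real MeasureTheory

open Set ProbabilityTheory

section GammaMoments

variable {a r s : ℝ}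

lemma gammaPDFReal_of_nonneg {t : ℝ} (ht : 0 ≤ t) :
    gammaPDFReal a r t = r ^ a / Gamma a * t ^ (a - 1) * exp (-(r * t)) :=
  if_pos ht

lemma rpow_mul_gammaPDFReal_eqOn :
    EqOn (fun t => t ^ s * gammaPDFReal a r t)
      (fun t => r ^ a / Gamma a * (t ^ (a + s - 1) * exp (-(r * t)))) (Ioi 0) := by
  intro t (ht : 0 < t)
  simp only [gammaPDFReal_of_nonneg ht.le]
  rw [show a + s - 1 = s + (a - 1) by ring, rpow_add ht]
  ring

lemma integrableOn_rpow_mul_gammaPDFReal (hr : 0 < r) (hs : -a < s) :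
    IntegrableOn (fun t => t ^ s * gammaPDFReal a r t) (Ioi 0) := by
  have h := integrableOn_rpow_mul_exp_neg_mul_rpow (s := a + s - 1) (by linarith) one_pos hr
  simp only [rpow_one, neg_mul] at h
  exact IntegrableOn.congr_fun (h.const_mul _) rpow_mul_gammaPDFReal_eqOn.symm measurableSet_Ioi

lemma integral_rpow_mul_gammaPDFReal (hr : 0 < r) (hs : -a < s) :
    ∫ t in Ioi 0, t ^ s * gammaPDFReal a r t = Gamma (a + s) / (Gamma a * r ^ s) := by
  rw [setIntegral_congr_fun measurableSet_Ioi rpow_mul_gammaPDFReal_eqOn, integral_const_mul,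
    integral_rpow_mul_exp_neg_mul_Ioi (by linarith) hr, one_div, inv_rpow hr.le, rpow_add hr]
  field_simp

end GammaMoments

lemma integrable_comp_abs {f : ℝ → ℝ} (hf : IntegrableOn f (Ioi 0)) :
    Integrable (fun x => f |x|) := by
  have hIoi : IntegrableOn (fun x => f |x|) (Ioi 0) :=
    hf.congr_fun (fun x hx => by rw [abs_of_pos hx]) measurableSet_Ioi
  have hIic : IntegrableOn (fun x => f |x|) (Iic 0) := by
    rw [← Measure.map_neg_eq_self (volume : Measure ℝ),
      (measurableEmbedding_neg (α := ℝ)).integrableOn_map_iff]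
    simp_rw [Function.comp_def, abs_neg, neg_preimage, neg_Iic, neg_zero]
    exact (integrableOn_Ici_iff_integrableOn_Ioi).mpr hIoi
  simpa using hIic.union hIoi

@[fun_prop]
lemma Measurable.gammaPDFReal {Ω : Type*} [MeasurableSpace Ω] {a : ℝ} {f g : Ω → ℝ}
    (hf : Measurable f) (hg : Measurable g) :
    Measurable fun ω => gammaPDFReal a (g ω) (f ω) :=
  Measurable.ite (measurableSet_le measurable_const hf) (by fun_prop) measurable_const

/-- Rate parametrisation: the paper's parental density with scale `β` is
`reflectedGammaPDFReal α β⁻¹ γ`. -/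
noncomputable def reflectedGammaPDFReal (a r γ x : ℝ) : ℝ :=
  gammaPDFReal a r |x - γ| / 2

section ReflectedGammaMoments

variable {a r s : ℝ}

lemma reflectedGammaPDFReal_nonneg (ha : 0 < a) (hr : 0 < r) (γ x : ℝ) :
    0 ≤ reflectedGammaPDFReal a r γ x :=
  div_nonneg (gammaPDFReal_nonneg ha hr _) zero_le_two

lemma integrable_abs_sub_rpow_mul_reflectedGammaPDFReal (γ : ℝ) (hr : 0 < r) (hs : -a < s) :
    Integrable fun x => |x - γ| ^ s * reflectedGammaPDFReal a r γ x := by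
  simp_rw [reflectedGammaPDFReal, ← mul_div_assoc]
  exact ((integrable_comp_abs (integrableOn_rpow_mul_gammaPDFReal hr hs)).comp_sub_right γ).div_const
    2

lemma integral_abs_sub_rpow_mul_reflectedGammaPDFReal (γ : ℝ) (hr : 0 < r) (hs : -a < s) :
    ∫ x, |x - γ| ^ s * reflectedGammaPDFReal a r γ x = Gamma (a + s) / (Gamma a * r ^ s) := by
  simp_rw [reflectedGammaPDFReal, ← mul_div_assoc]
  rw [integral_div, integral_sub_right_eq_self (fun x => |x| ^ s * gammaPDFReal a r |x|),
    integral_comp_abs (f := fun t => t ^ s * gammaPDFReal a r t),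
    integral_rpow_mul_gammaPDFReal hr hs]
  ring

end ReflectedGammaMoments

lemma skdDensity_eq_integral_reflectedGammaPDFReal_mul_gammaPDFReal (α ζ δ γ x : ℝ) :
    skdDensity α ζ δ γ x = ∫ β in Ioi 0, reflectedGammaPDFReal α β⁻¹ γ x * gammaPDFReal ζ δ β := by
  refine setIntegral_congr_fun measurableSet_Ioi fun β (hβ : 0 < β) => ?_
  simp only [reflectedGammaPDFReal, gammaPDFReal_of_nonneg hβ.le, abs_nonneg,
    gammaPDFReal_of_nonneg, inv_rpow hβ.le]
  ring_nf

theorem integral_abs_sub_rpow_mul_skdDensity {α ζ δ s : ℝ} (γ : ℝ) (hα : 0 < α) (hζ : 0 < ζ)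
    (hδ : 0 < δ) (hsα : -α < s) (hsζ : -ζ < s) :
    ∫ x, |x - γ| ^ s * skdDensity α ζ δ γ x
      = Gamma (α + s) * Gamma (ζ + s) / (Gamma α * Gamma ζ * δ ^ s) := by
  set F : ℝ → ℝ → ℝ :=
    fun x β => |x - γ| ^ s * reflectedGammaPDFReal α β⁻¹ γ x * gammaPDFReal ζ δ β
  have hF_nonneg : ∀ x, ∀ β ∈ Ioi (0 : ℝ), 0 ≤ F x β := fun x β (hβ : 0 < β) =>
    mul_nonneg (mul_nonneg (rpow_nonneg (abs_nonneg _) _)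
      (reflectedGammaPDFReal_nonneg hα (inv_pos.2 hβ) γ x)) (gammaPDFReal_nonneg hζ hδ β)
  have hF_inner : ∀ β ∈ Ioi (0 : ℝ),
      ∫ x, F x β = Gamma (α + s) / Gamma α * (β ^ s * gammaPDFReal ζ δ β) := by
    intro β (hβ : 0 < β)
    rw [integral_mul_const, integral_abs_sub_rpow_mul_reflectedGammaPDFReal γ (inv_pos.2 hβ) hsα,
      inv_rpow hβ.le]
    field_simp
  have hF_int : Integrable (Function.uncurry F) (volume.prod (volume.restrict (Ioi 0))) := by
    refine (integrable_prod_iff' ?_).2 ⟨?_, ?_⟩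
    · unfold F reflectedGammaPDFReal
      fun_prop
    · filter_upwards [ae_restrict_mem measurableSet_Ioi] with β (hβ : 0 < β)
      exact (integrable_abs_sub_rpow_mul_reflectedGammaPDFReal γ (inv_pos.2 hβ) hsα).mul_const
        (gammaPDFReal ζ δ β)
    · refine IntegrableOn.congr_fun ((integrableOn_rpow_mul_gammaPDFReal hδ hsζ).const_mul
        (Gamma (α + s) / Gamma α)) (fun β hβ => ?_) measurableSet_Ioi
      simp only [Function.uncurry_apply_pair]
      rw [← hF_inner β hβ]
      exact integral_congr_ae (.of_forall fun x => (Real.norm_of_nonneg (hF_nonneg x β hβ)).symm)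
  calc ∫ x, |x - γ| ^ s * skdDensity α ζ δ γ x = ∫ x, ∫ β in Ioi 0, F x β := by
        simp_rw [F, skdDensity_eq_integral_reflectedGammaPDFReal_mul_gammaPDFReal, mul_assoc,
          integral_const_mul]
    _ = ∫ β in Ioi 0, ∫ x, F x β := integral_integral_swap hF_int
    _ = ∫ β in Ioi 0, Gamma (α + s) / Gamma α * (β ^ s * gammaPDFReal ζ δ β) :=
        setIntegral_congr_fun measurableSet_Ioi hF_inner
    _ = Gamma (α + s) * Gamma (ζ + s) / (Gamma α * Gamma ζ * δ ^ s) := by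
        rw [integral_const_mul, integral_rpow_mul_gammaPDFReal hδ hsζ]
        ring

lemma Gamma_add_four {a : ℝ} (ha : 0 < a) :
    Gamma (a + 4) = a * (a + 1) * (a + 2) * (a + 3) * Gamma a := by
  rw [show a + 4 = a + 3 + 1 by ring, Gamma_add_one (by linarith),
    show a + 3 = a + 2 + 1 by ring, Gamma_add_one (by linarith),
    show a + 2 = a + 1 + 1 by ring, Gamma_add_one (by linarith), Gamma_add_one ha.ne']
  ring

/-- The fourth central moment of the symmetric K-distribution. -/
theorem skd_fourth_central_moment (α ζ δ γ : ℝ) (hα : 0 < α) (hζ : 0 < ζ) (hδ : 0 < δ) :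
    ∫ x : ℝ, (x - γ) ^ 4 * skdDensity α ζ δ γ x
      = α * (α + 1) * (α + 2) * (α + 3) * ζ * (ζ + 1) * (ζ + 2) * (ζ + 3) / δ ^ 4 := by
  have h := integral_abs_sub_rpow_mul_skdDensity γ hα hζ hδ (s := 4) (by linarith) (by linarith)
  simp only [rpow_ofNat, Even.pow_abs ⟨2, rfl⟩, Gamma_add_four hα, Gamma_add_four hζ] at h
  have hΓα := (Gamma_pos_of_pos hα).ne'
  have hΓζ := (Gamma_pos_of_pos hζ).ne'
  rw [h]
  field_simp
end
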